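/- arXiv:2602.05621 — 2 statements merged into one kernel-verified Lean document; each statement's English description precedes it below -/
import Mathlib

section
/- Let Ω ⊂ ℝ be an open bounded interval and let ω : (0,∞) → (0,∞) be nondecreasing. Then for all p ≥ 1 and each η > 0 there exists C(p,η) > 0 such that ∫_Ω |φ_x|^{2p+2} dx ≤ η ∫_Ω |φ_x|^{2p−2} φ_xx² dx + C(p,η)·‖φ‖_{L^∞(Ω)}^{2p+2} holds for all φ ∈ S_ω, where S_ω is the set of all φ̃ ∈ C²(Ω̄) with ∂φ̃/∂ν = 0 on ∂Ω and such that for all η' > 0 one has |φ̃(x) − φ̃(y)| < η' whenever x, y ∈ Ω̄ satisfy |x − y| < ω(η'). -/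
/-!
With `u = φ'`, write `|u|^{2p+2} = u · W(u)` where `W(y) = |y|^{2p} y` has
`(W ∘ u)' = (2p+1) |u|^{2p} u'`. On a subinterval `[A, B]` subtract from `φ` its secant
`φ(A) + s (x - A)` to get `ψ` with `ψ(A) = ψ(B) = 0` and `ψ' = u - s`; integrating by parts,
`∫ |u|^{2p+2} = ∫ (s W(u) - (2p+1) ψ |u|^{2p} u')`, and Young's inequality bounds the right side
by `(2p+1)² ‖ψ‖∞² ∫ |u|^{2p-2} u'² + ½ ∫ |u|^{2p+2} + K(|s|) (B - A)`; the middle term is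
absorbed into the left side.

If `‖φ‖∞ ≤ δ`, do this once on `Ω` with `ψ = φ`, `s = 0` (the boundary terms vanish because
`φ' = 0` on `∂Ω`). Otherwise cut `Ω` into pieces of length `h < ω(δ)`, where the modulus of
continuity gives `‖ψ‖∞ ≤ 2δ` and `|s| ≤ δ / h`; the resulting additive constant is
`≤ C ‖φ‖∞^{2p+2}` with `C = K(δ / h) (r - l) / δ^{2p+2}` because `δ < ‖φ‖∞`. Choosing `δ` with
`8 (2p+1)² δ² = η` gives the claim.
-/

open Set MeasureTheory

theorem mul_abs_rpow_mul_self {q : ℝ} (hq : 0 ≤ q) (y : ℝ) :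
    y * (|y| ^ q * y) = |y| ^ (q + 2) := by
  rw [Real.rpow_add' (abs_nonneg y) (by linarith), Real.rpow_two, sq_abs]
  ring

theorem abs_abs_rpow_mul_self {q : ℝ} (hq : 0 ≤ q) (y : ℝ) :
    |(|y| ^ q * y)| = |y| ^ (q + 1) := by
  rw [abs_mul, abs_of_nonneg (by positivity), Real.rpow_add_one' (abs_nonneg y) (by linarith)]

theorem hasDerivAt_abs_rpow_mul_self {q : ℝ} (hq : 1 < q) (y : ℝ) :
    HasDerivAt (fun y => |y| ^ q * y) ((q + 1) * |y| ^ q) y := by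
  refine ((hasDerivAt_abs_rpow y hq).mul (hasDerivAt_id y)).congr_deriv ?_
  have : |y| ^ q = |y| ^ (q - 2) * y ^ 2 := by
    rw [← sq_abs, ← Real.rpow_two, ← Real.rpow_add' (abs_nonneg y) (by linarith)]
    ring_nf
  rw [this, id]
  ring

theorem mul_rpow_mul_abs_le (c : ℝ) {p : ℝ} (hp : 1 ≤ p) (a b : ℝ) :
    c * (|a| ^ (2 * p) * |b|) ≤ c ^ 2 * (|a| ^ (2 * p - 2) * b ^ 2) + |a| ^ (2 * p + 2) / 4 := by
  have hpow (e e₁ e₂ : ℝ) (he : e = e₁ + e₂) (h₁ : 0 ≤ e₁) (h₂ : 0 ≤ e₂) :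
      |a| ^ e = |a| ^ e₁ * |a| ^ e₂ :=
    he ▸ Real.rpow_add_of_nonneg (abs_nonneg a) h₁ h₂
  rw [hpow (2 * p) (p - 1) (p + 1) (by ring) (by linarith) (by linarith),
    hpow (2 * p - 2) (p - 1) (p - 1) (by ring) (by linarith) (by linarith),
    hpow (2 * p + 2) (p + 1) (p + 1) (by ring) (by linarith) (by linarith), ← sq_abs b]
  nlinarith [sq_nonneg (c * |a| ^ (p - 1) * |b| - |a| ^ (p + 1) / 2)]

theorem mul_rpow_le_rpow_add_one_div_four {σ A r : ℝ} (hσ : 0 ≤ σ) (hA : 0 ≤ A) (hr : 0 ≤ r) :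
    σ * A ^ r ≤ A ^ (r + 1) / 4 + σ * (4 * σ) ^ r := by
  rcases le_or_gt A (4 * σ) with h | h
  · have := Real.rpow_le_rpow hA h hr
    have : 0 ≤ A ^ (r + 1) := by positivity
    nlinarith
  · rw [Real.rpow_add_one' hA (by linarith)]
    have : 0 ≤ A ^ r := by positivity
    have : 0 ≤ σ * (4 * σ) ^ r := by positivity
    nlinarith

theorem mul_abs_rpow_mul_self_sub_le {p s σ y ε : ℝ} (hp : 1 ≤ p) (hs : |s| ≤ σ) (hy : |y| ≤ ε)
    (a b : ℝ) :
    s * (|a| ^ (2 * p) * a) - y * ((2 * p + 1) * (|a| ^ (2 * p) * b)) ≤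
      ((2 * p + 1) * ε) ^ 2 * (|a| ^ (2 * p - 2) * b ^ 2) + σ * (4 * σ) ^ (2 * p + 1) +
        |a| ^ (2 * p + 2) / 2 := by
  have hσ : 0 ≤ σ := (abs_nonneg s).trans hs
  have hsW : s * (|a| ^ (2 * p) * a) ≤ σ * |a| ^ (2 * p + 1) :=
    calc s * (|a| ^ (2 * p) * a) ≤ |s| * |(|a| ^ (2 * p) * a)| := by
          rw [← abs_mul]; exact le_abs_self _
      _ ≤ σ * |a| ^ (2 * p + 1) := by rw [abs_abs_rpow_mul_self (by linarith)]; gcongr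
  have hyW' : -(y * ((2 * p + 1) * (|a| ^ (2 * p) * b))) ≤
      (2 * p + 1) * ε * (|a| ^ (2 * p) * |b|) :=
    calc -(y * ((2 * p + 1) * (|a| ^ (2 * p) * b)))
        ≤ |y * ((2 * p + 1) * (|a| ^ (2 * p) * b))| := neg_le_abs _
      _ = |y| * ((2 * p + 1) * (|a| ^ (2 * p) * |b|)) := by
          rw [abs_mul, abs_mul, abs_mul, abs_of_pos (by linarith : (0 : ℝ) < 2 * p + 1),
            abs_of_nonneg (by positivity : (0 : ℝ) ≤ |a| ^ (2 * p))]
      _ ≤ ε * ((2 * p + 1) * (|a| ^ (2 * p) * |b|)) := by gcongr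
      _ = _ := by ring
  have h₁ := mul_rpow_le_rpow_add_one_div_four hσ (abs_nonneg a) (by linarith : 0 ≤ 2 * p + 1)
  have h₂ := mul_rpow_mul_abs_le ((2 * p + 1) * ε) hp a b
  rw [show 2 * p + 1 + 1 = 2 * p + 2 by ring] at h₁
  linarith

theorem integral_abs_rpow_eq_of_hasDerivAt {q s A B : ℝ} {ψ u v : ℝ → ℝ} (hq : 1 < q)
    (hAB : A ≤ B) (hψ : ∀ x ∈ Icc A B, HasDerivAt ψ (u x - s) x)
    (hu : ∀ x ∈ Icc A B, HasDerivAt u (v x) x) (hv : ContinuousOn v (Icc A B))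
    (hbdry : ψ B * (|u B| ^ q * u B) = ψ A * (|u A| ^ q * u A)) :
    ∫ x in A..B, |u x| ^ (q + 2) =
      ∫ x in A..B, (s * (|u x| ^ q * u x) - ψ x * ((q + 1) * (|u x| ^ q * v x))) := by
  have huc : ContinuousOn u (Icc A B) := fun x hx => (hu x hx).continuousAt.continuousWithinAt
  have hψc : ContinuousOn ψ (Icc A B) := fun x hx => (hψ x hx).continuousAt.continuousWithinAt
  have hpow := huc.abs.rpow_const (p := q) fun _ _ => Or.inr (by linarith)
  have hint {f : ℝ → ℝ} (hf : ContinuousOn f (Icc A B)) : IntervalIntegrable f volume A B :=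
    hf.intervalIntegrable_of_Icc hAB
  have hibp := intervalIntegral.integral_mul_deriv_eq_deriv_mul (v := fun x => |u x| ^ q * u x)
    (fun x hx => hψ x (uIcc_of_le hAB ▸ hx))
    (fun x hx => ((hasDerivAt_abs_rpow_mul_self hq (u x)).comp x
      (hu x (uIcc_of_le hAB ▸ hx))).congr_deriv (by ring))
    (hint (by fun_prop)) (hint (f := fun x => (q + 1) * (|u x| ^ q * v x)) (by fun_prop))
  calc ∫ x in A..B, |u x| ^ (q + 2)
      = ∫ x in A..B, ((u x - s) * (|u x| ^ q * u x) + s * (|u x| ^ q * u x)) := by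
        refine intervalIntegral.integral_congr fun x _ => ?_
        simp only [← mul_abs_rpow_mul_self (by linarith : 0 ≤ q) (u x)]
        ring
    _ = (∫ x in A..B, s * (|u x| ^ q * u x)) -
          ∫ x in A..B, ψ x * ((q + 1) * (|u x| ^ q * v x)) := by
        rw [intervalIntegral.integral_add (hint (by fun_prop)) (hint (by fun_prop)), hibp, hbdry]
        ring
    _ = _ := (intervalIntegral.integral_sub (hint (by fun_prop)) (hint (by fun_prop))).symm

theorem integral_abs_rpow_le_of_hasDerivAt {p s σ ε A B : ℝ} {ψ u v : ℝ → ℝ} (hp : 1 ≤ p)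
    (hAB : A ≤ B) (hψ : ∀ x ∈ Icc A B, HasDerivAt ψ (u x - s) x)
    (hu : ∀ x ∈ Icc A B, HasDerivAt u (v x) x) (hv : ContinuousOn v (Icc A B))
    (hbdry : ψ B * (|u B| ^ (2 * p) * u B) = ψ A * (|u A| ^ (2 * p) * u A))
    (hψε : ∀ x ∈ Icc A B, |ψ x| ≤ ε) (hsσ : |s| ≤ σ) :
    ∫ x in A..B, |u x| ^ (2 * p + 2) ≤
      ∫ x in A..B, 2 * (((2 * p + 1) * ε) ^ 2 * (|u x| ^ (2 * p - 2) * v x ^ 2) +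
        σ * (4 * σ) ^ (2 * p + 1)) := by
  have huc : ContinuousOn u (Icc A B) := fun x hx => (hu x hx).continuousAt.continuousWithinAt
  have hψc : ContinuousOn ψ (Icc A B) := fun x hx => (hψ x hx).continuousAt.continuousWithinAt
  have hpow {e : ℝ} (he : 0 ≤ e) : ContinuousOn (fun x => |u x| ^ e) (Icc A B) :=
    huc.abs.rpow_const fun _ _ => Or.inr he
  have hpow_2p := hpow (e := 2 * p) (by linarith)
  have hpow_sub := hpow (e := 2 * p - 2) (by linarith)
  have hpow_add := hpow (e := 2 * p + 2) (by linarith)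
  have hint {f : ℝ → ℝ} (hf : ContinuousOn f (Icc A B)) : IntervalIntegrable f volume A B :=
    hf.intervalIntegrable_of_Icc hAB
  have hmono := intervalIntegral.integral_mono_on hAB (hint (by fun_prop)) (hint (by fun_prop))
    fun x hx => mul_abs_rpow_mul_self_sub_le hp hsσ (hψε x hx) (u x) (v x)
  rw [← integral_abs_rpow_eq_of_hasDerivAt (by linarith) hAB hψ hu hv hbdry,
    intervalIntegral.integral_add (hint (by fun_prop)) (hint (by fun_prop)),
    intervalIntegral.integral_div] at hmono
  rw [intervalIntegral.integral_const_mul]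
  linarith

theorem integral_le_integral_of_uniform_partition {f g : ℝ → ℝ} {l r : ℝ} {N : ℕ} (hN : 0 < N)
    (hlr : l ≤ r) (hf : IntervalIntegrable f volume l r) (hg : IntervalIntegrable g volume l r)
    (hstep : ∀ A, l ≤ A → A + (r - l) / N ≤ r →
      ∫ x in A..A + (r - l) / N, f x ≤ ∫ x in A..A + (r - l) / N, g x) :
    ∫ x in l..r, f x ≤ ∫ x in l..r, g x := by
  set h := (r - l) / N
  have hh : 0 ≤ h := by positivity
  have hNh : N * h = r - l := mul_div_cancel₀ _ (by positivity)
  set a : ℕ → ℝ := fun k => l + k * h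
  have ha0 : a 0 = l := by simp [a]
  have haN : a N = r := by simp only [a]; linarith
  have hsucc (k : ℕ) : a (k + 1) = a k + h := by simp only [a]; push_cast; ring
  have hmem {k : ℕ} (hk : k ≤ N) : a k ∈ Icc l r := by
    have : (k : ℝ) * h ≤ N * h := by gcongr
    constructor <;> simp only [a] <;> nlinarith
  have hsub {k : ℕ} (hk : k < N) : uIcc (a k) (a (k + 1)) ⊆ uIcc l r :=
    uIcc_subset_uIcc (Icc_subset_uIcc (hmem hk.le)) (Icc_subset_uIcc (hmem hk))
  have hsum {F : ℝ → ℝ} (hF : IntervalIntegrable F volume l r) :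
      ∑ k ∈ Finset.range N, ∫ x in a k..a (k + 1), F x = ∫ x in l..r, F x := by
    rw [intervalIntegral.sum_integral_adjacent_intervals (a := a) fun k hk => hF.mono_set (hsub hk),
      ha0, haN]
  rw [← hsum hf, ← hsum hg]
  refine Finset.sum_le_sum fun k hk => ?_
  have hk : k < N := Finset.mem_range.mp hk
  rw [hsucc]
  exact hstep (a k) (hmem hk.le).1 (hsucc k ▸ (hmem hk).2)

theorem integral_abs_rpow_le_of_abs_le {p ε l r : ℝ} {φ u v : ℝ → ℝ} (hp : 1 ≤ p) (hlr : l ≤ r)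
    (hφ : ∀ x ∈ Icc l r, HasDerivAt φ (u x) x) (hu : ∀ x ∈ Icc l r, HasDerivAt u (v x) x)
    (hv : ContinuousOn v (Icc l r)) (hul : u l = 0) (hur : u r = 0)
    (hφε : ∀ x ∈ Icc l r, |φ x| ≤ ε) :
    ∫ x in l..r, |u x| ^ (2 * p + 2) ≤
      2 * ((2 * p + 1) * ε) ^ 2 * ∫ x in l..r, |u x| ^ (2 * p - 2) * v x ^ 2 := by
  have h := integral_abs_rpow_le_of_hasDerivAt (s := 0) (σ := 0) hp hlr
    (fun x hx => (sub_zero (u x)).symm ▸ hφ x hx) hu hv (by simp [hul, hur]) hφε (by simp)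
  simp only [zero_mul, add_zero, intervalIntegral.integral_const_mul] at h
  rwa [mul_assoc]

theorem integral_abs_rpow_le_of_oscillation_le {p δ l r : ℝ} {N : ℕ} {φ u v : ℝ → ℝ} (hp : 1 ≤ p)
    (hN : 0 < N) (hlr : l < r) (hφ : ∀ x ∈ Icc l r, HasDerivAt φ (u x) x)
    (hu : ∀ x ∈ Icc l r, HasDerivAt u (v x) x) (hv : ContinuousOn v (Icc l r))
    (hosc : ∀ x ∈ Icc l r, ∀ y ∈ Icc l r, |x - y| ≤ (r - l) / N → |φ x - φ y| ≤ δ) :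
    ∫ x in l..r, |u x| ^ (2 * p + 2) ≤
      2 * ((2 * p + 1) * (2 * δ)) ^ 2 * (∫ x in l..r, |u x| ^ (2 * p - 2) * v x ^ 2) +
        2 * (δ / ((r - l) / N)) * (4 * (δ / ((r - l) / N))) ^ (2 * p + 1) * (r - l) := by
  set h := (r - l) / N
  set σ := δ / h
  have hh : 0 < h := div_pos (by linarith) (by positivity)
  have huc : ContinuousOn u (Icc l r) := fun x hx => (hu x hx).continuousAt.continuousWithinAt
  have hXc : ContinuousOn (fun x => |u x| ^ (2 * p - 2) * v x ^ 2) (Icc l r) :=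
    (huc.abs.rpow_const fun _ _ => Or.inr (by linarith)).mul (hv.pow 2)
  have hXi := hXc.intervalIntegrable_of_Icc (μ := volume) hlr.le
  have hlocal : ∀ A, l ≤ A → A + h ≤ r → ∫ x in A..A + h, |u x| ^ (2 * p + 2) ≤
      ∫ x in A..A + h, 2 * (((2 * p + 1) * (2 * δ)) ^ 2 * (|u x| ^ (2 * p - 2) * v x ^ 2) +
        σ * (4 * σ) ^ (2 * p + 1)) := by
    intro A hlA hAr
    have hsub : Icc A (A + h) ⊆ Icc l r := Icc_subset_Icc hlA hAr
    have hdist {x} (hx : x ∈ Icc A (A + h)) : |x - A| ≤ h := by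
      rw [abs_of_nonneg (by linarith [hx.1])]; linarith [hx.2]
    have hosc' {x} (hx : x ∈ Icc A (A + h)) : |φ x - φ A| ≤ δ :=
      hosc x (hsub hx) A (hsub (left_mem_Icc.mpr (by linarith))) (hdist hx)
    set s := (φ (A + h) - φ A) / h
    have hs : |s| ≤ σ := by
      rw [abs_div, abs_of_pos hh]
      exact div_le_div_of_nonneg_right (hosc' (right_mem_Icc.mpr (by linarith))) hh.le
    refine integral_abs_rpow_le_of_hasDerivAt (ψ := fun x => φ x - φ A - s * (x - A)) hp
      (by linarith) (fun x hx => ?_) (fun x hx => hu x (hsub hx)) (hv.mono hsub) ?_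
      (fun x hx => ?_) hs
    · exact (((hφ x (hsub hx)).sub_const (φ A)).sub
        (((hasDerivAt_id x).sub_const A).const_mul s)).congr_deriv (by simp)
    · simp only [s, sub_self, mul_zero, add_sub_cancel_left, div_mul_cancel₀ _ hh.ne', zero_mul]
    · calc |φ x - φ A - s * (x - A)| ≤ |φ x - φ A| + |s| * |x - A| := by
            rw [← abs_mul]; exact abs_sub _ _
        _ ≤ δ + σ * h := by
            gcongr
            · exact hosc' hx
            · exact (abs_nonneg s).trans hs
            · exact hdist hx
        _ = 2 * δ := by rw [div_mul_cancel₀ _ hh.ne']; ring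
  have hYi : IntervalIntegrable (fun x => |u x| ^ (2 * p + 2)) volume l r :=
    (huc.abs.rpow_const fun _ _ => Or.inr (by linarith)).intervalIntegrable_of_Icc hlr.le
  have hsum := integral_le_integral_of_uniform_partition hN hlr.le hYi
    ((hXi.const_mul _).add intervalIntegrable_const |>.const_mul 2) hlocal
  rw [intervalIntegral.integral_const_mul, intervalIntegral.integral_add (hXi.const_mul _)
    intervalIntegrable_const, intervalIntegral.integral_const_mul, intervalIntegral.integral_const,
    smul_eq_mul] at hsum
  linarith

theorem integral_abs_rpow_le_add_sSup_abs_rpow {p δ l r : ℝ} {N : ℕ} {φ u v : ℝ → ℝ}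
    (hp : 1 ≤ p) (hN : 0 < N) (hlr : l < r) (hδ : 0 < δ) (hφ : ∀ x ∈ Icc l r, HasDerivAt φ (u x) x)
    (hu : ∀ x ∈ Icc l r, HasDerivAt u (v x) x) (hv : ContinuousOn v (Icc l r)) (hul : u l = 0)
    (hur : u r = 0)
    (hosc : ∀ x ∈ Icc l r, ∀ y ∈ Icc l r, |x - y| ≤ (r - l) / N → |φ x - φ y| ≤ δ) :
    ∫ x in l..r, |u x| ^ (2 * p + 2) ≤
      8 * ((2 * p + 1) * δ) ^ 2 * (∫ x in l..r, |u x| ^ (2 * p - 2) * v x ^ 2) +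
        2 * (δ / ((r - l) / N)) * (4 * (δ / ((r - l) / N))) ^ (2 * p + 1) * (r - l) /
          δ ^ (2 * p + 2) * sSup ((fun x => |φ x|) '' Icc l r) ^ (2 * p + 2) := by
  set K := 2 * (δ / ((r - l) / N)) * (4 * (δ / ((r - l) / N))) ^ (2 * p + 1) * (r - l)
  have hK : 0 < K := by have := sub_pos.2 hlr; positivity
  set M := sSup ((fun x => |φ x|) '' Icc l r)
  have hφc : ContinuousOn φ (Icc l r) := fun x hx => (hφ x hx).continuousAt.continuousWithinAt
  have hM (x) (hx : x ∈ Icc l r) : |φ x| ≤ M :=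
    le_csSup (isCompact_Icc.image_of_continuousOn hφc.abs).bddAbove ⟨x, hx, rfl⟩
  have hM0 : 0 ≤ M := (abs_nonneg _).trans (hM l (left_mem_Icc.2 hlr.le))
  rcases le_or_gt M δ with hMδ | hMδ
  · have hI := integral_abs_rpow_le_of_abs_le hp hlr.le hφ hu hv hul hur
      fun x hx => (hM x hx).trans hMδ
    have hJ0 : 0 ≤ ∫ x in l..r, |u x| ^ (2 * p - 2) * v x ^ 2 :=
      intervalIntegral.integral_nonneg hlr.le fun x _ => by positivity
    have : 0 ≤ K / δ ^ (2 * p + 2) * M ^ (2 * p + 2) := by positivity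
    nlinarith [mul_nonneg (sq_nonneg ((2 * p + 1) * δ)) hJ0]
  · have hI := integral_abs_rpow_le_of_oscillation_le hp hN hlr hφ hu hv hosc
    have hKM : K ≤ K / δ ^ (2 * p + 2) * M ^ (2 * p + 2) := by
      rw [div_mul_eq_mul_div, le_div_iff₀ (by positivity)]
      gcongr
    rw [show 2 * ((2 * p + 1) * (2 * δ)) ^ 2 = 8 * ((2 * p + 1) * δ) ^ 2 by ring] at hI
    exact hI.trans (add_le_add_right hKM _)

theorem ehrling_type_inequality_general
    (l r : ℝ) (hlr : l < r) (ω : ℝ → ℝ)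
    (hωpos : ∀ s : ℝ, 0 < s → 0 < ω s)
    (p : ℝ) (hp : 1 ≤ p) (η : ℝ) (hη : 0 < η) :
    ∃ C > (0:ℝ), ∀ φ : ℝ → ℝ,
      -- `φ ∈ C²(Ω̄)`
      (∀ x ∈ Icc l r, DifferentiableAt ℝ φ x ∧ DifferentiableAt ℝ (deriv φ) x) →
      ContinuousOn (deriv (deriv φ)) (Icc l r) →
      -- `∂φ/∂ν = 0` on `∂Ω`
      deriv φ l = 0 → deriv φ r = 0 →
      -- `ω` is a modulus of continuity of `φ`
      (∀ η' : ℝ, 0 < η' → ∀ x ∈ Icc l r, ∀ y ∈ Icc l r, |x - y| < ω η' → |φ x - φ y| < η') →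
      (∫ x in Ioo l r, |deriv φ x| ^ (2 * p + 2)) ≤
        η * (∫ x in Ioo l r, |deriv φ x| ^ (2 * p - 2) * (deriv (deriv φ) x) ^ 2) +
          C * (sSup ((fun x => |φ x|) '' Icc l r)) ^ (2 * p + 2) := by
  obtain ⟨δ, hδ, hδη⟩ : ∃ δ > 0, 8 * ((2 * p + 1) * δ) ^ 2 = η :=
    ⟨√(η / 8) / (2 * p + 1), by positivity, by
      rw [mul_div_cancel₀ _ (by positivity), Real.sq_sqrt (by positivity)]; ring⟩
  have hωδ := hωpos δ hδ
  have hlr' : 0 < r - l := sub_pos.2 hlr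
  obtain ⟨N, hN⟩ := exists_nat_gt ((r - l) / ω δ)
  have hNpos : 0 < N := by exact_mod_cast (div_pos hlr' hωδ).trans hN
  have hstep : (r - l) / N < ω δ := by
    rw [div_lt_iff₀ (by positivity)]; rwa [div_lt_iff₀ hωδ, mul_comm] at hN
  refine ⟨2 * (δ / ((r - l) / N)) * (4 * (δ / ((r - l) / N))) ^ (2 * p + 1) * (r - l) /
    δ ^ (2 * p + 2), by positivity, fun φ hC2 hφ''c hul hur hmod => ?_⟩
  simp only [← integral_Ioc_eq_integral_Ioo, ← intervalIntegral.integral_of_le hlr.le, ← hδη]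
  exact integral_abs_rpow_le_add_sSup_abs_rpow hp hNpos hlr hδ (fun x hx => (hC2 x hx).1.hasDerivAt)
    (fun x hx => (hC2 x hx).2.hasDerivAt) hφ''c hul hur
    fun x hx y hy hxy => (hmod δ hδ x hx y hy (hxy.trans_lt hstep)).le

/-- **Lemma 2.4 (Ehrling-type inequality).** Let `Ω = (l,r)` be an open bounded interval
and let `ω : (0,∞) → (0,∞)` be nondecreasing. Then for all `p ≥ 1` and each `η > 0` there
exists `C(p,η) > 0` such that
`∫_Ω |φ'|^{2p+2} ≤ η ∫_Ω |φ'|^{2p−2} (φ'')² + C(p,η) ‖φ‖_{L^∞(Ω)}^{2p+2}`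
holds for all `φ ∈ S_ω`, i.e. all `φ ∈ C²(Ω̄)` with `φ' = 0` on `∂Ω` which admit `ω` as a
modulus of continuity: for all `η' > 0`, `|φ(x) − φ(y)| < η'` whenever `x, y ∈ Ω̄` satisfy
`|x − y| < ω(η')`. -/
theorem ehrling_type_inequality
    (l r : ℝ) (hlr : l < r) (ω : ℝ → ℝ)
    (hωpos : ∀ s : ℝ, 0 < s → 0 < ω s)
    (hωmono : ∀ s₁ s₂ : ℝ, 0 < s₁ → s₁ ≤ s₂ → ω s₁ ≤ ω s₂)
    (p : ℝ) (hp : 1 ≤ p) (η : ℝ) (hη : 0 < η) :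
    ∃ C > (0:ℝ), ∀ φ : ℝ → ℝ,
      -- `φ ∈ C²(Ω̄)`
      (∀ x ∈ Icc l r, DifferentiableAt ℝ φ x ∧ DifferentiableAt ℝ (deriv φ) x) →
      ContinuousOn (deriv (deriv φ)) (Icc l r) →
      -- `∂φ/∂ν = 0` on `∂Ω`
      deriv φ l = 0 → deriv φ r = 0 →
      -- `ω` is a modulus of continuity of `φ`
      (∀ η' : ℝ, 0 < η' → ∀ x ∈ Icc l r, ∀ y ∈ Icc l r, |x - y| < ω η' → |φ x - φ y| < η') →
      (∫ x in Ioo l r, |deriv φ x| ^ (2 * p + 2)) ≤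
        η * (∫ x in Ioo l r, |deriv φ x| ^ (2 * p - 2) * (deriv (deriv φ) x) ^ 2) +
          C * (sSup ((fun x => |φ x|) '' Icc l r)) ^ (2 * p + 2) :=
  ehrling_type_inequality_general l r hlr ω hωpos p hp η hη
end

section
/- Suppose Ω ⊂ ℝ is an open bounded interval, D > 0, the parameter functions a, γ, f satisfy the structural hypotheses, and (u, Θ) is a classical solution of (⋆) on Ω × (0,T_max) with Θ ≥ 0. Then with c_3 := (C_γ²D + 1)/D² and c_4 := C_f⁴, the differential inequality (1/2) d/dt ∫_Ω Θ_x² dx + (D/2) ∫_Ω Θ_xx² dx ≤ c_3 ∫_Ω u_tx⁴ dx + c_4 ∫_Ω (Θ+1)^{4α} dx holds for all t ∈ (0,T_max). -/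
open Set MeasureTheory
open scoped ENNReal

noncomputable section

/-- Partial derivative in the first (space) variable. -/
def pdx (w : ℝ → ℝ → ℝ) : ℝ → ℝ → ℝ := fun x t => deriv (fun y => w y t) x

/-- Partial derivative in the second (time) variable. -/
def pdt (w : ℝ → ℝ → ℝ) : ℝ → ℝ → ℝ := fun x t => deriv (fun s => w x s) t

/-- Membership in the Sobolev space `W^{k,2}((l,r))`, encoded via the classical
iterated derivatives being square-integrable on the interval. -/
def MemW (k : ℕ) (g : ℝ → ℝ) (l r : ℝ) : Prop :=
  ∀ j ≤ k, MeasureTheory.MemLp (iteratedDeriv j g) 2 (volume.restrict (Ioo l r))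

/-- `C^{2,1}` regularity (twice continuously differentiable in space, once in time)
of `w` on `Sx ×ˢ St`. -/
def C21On (w : ℝ → ℝ → ℝ) (Sx St : Set ℝ) : Prop :=
  (∀ x ∈ Sx, ∀ t ∈ St,
      DifferentiableAt ℝ (fun y => w y t) x ∧
      DifferentiableAt ℝ (fun y => pdx w y t) x ∧
      DifferentiableAt ℝ (fun s => w x s) t) ∧
  ContinuousOn (fun p : ℝ × ℝ => w p.1 p.2) (Sx ×ˢ St) ∧
  ContinuousOn (fun p : ℝ × ℝ => pdx w p.1 p.2) (Sx ×ˢ St) ∧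
  ContinuousOn (fun p : ℝ × ℝ => pdx (pdx w) p.1 p.2) (Sx ×ˢ St) ∧
  ContinuousOn (fun p : ℝ × ℝ => pdt w p.1 p.2) (Sx ×ˢ St)

/-- The open time interval `(0, Tmax)` for `Tmax ∈ (0,∞]`, as a set of reals. -/
def TJ (Tmax : ℝ≥0∞) : Set ℝ := {t : ℝ | 0 < t ∧ ENNReal.ofReal t < Tmax}

/-- Structural hypotheses on the parameter functions `γ`, `a`, `f`. -/
def StructHyp (l r : ℝ) (cγ Cγ Cf α : ℝ) (γ f : ℝ → ℝ) (a : ℝ → ℝ → ℝ) : Prop :=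
  0 < cγ ∧ cγ < 1 ∧ 1 < Cγ ∧ 1 < Cf ∧ 0 < α ∧ α < 5 / 6 ∧
  ContDiffOn ℝ 2 (fun p : ℝ × ℝ => a p.1 p.2) (Icc l r ×ˢ Ici 0) ∧
  (∀ x ∈ Icc l r, ∀ t : ℝ, 0 ≤ t → 0 < a x t) ∧
  ContDiffOn ℝ 2 γ (Ici 0) ∧
  ContDiffOn ℝ 1 f (Ici 0) ∧
  (∀ ζ : ℝ, 0 ≤ ζ → cγ < γ ζ ∧ γ ζ < Cγ) ∧
  (∀ ζ : ℝ, 0 ≤ ζ → deriv (deriv γ) ζ ≤ 0) ∧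
  f 0 = 0 ∧
  (∀ ζ : ℝ, 0 ≤ ζ → |deriv f ζ| ≤ Cf) ∧
  (∀ ζ : ℝ, 0 ≤ ζ → |f ζ| ≤ Cf * (ζ + 1) ^ α)

/-- `(u,Θ)` is a classical solution of the system (⋆) on `(l,r) × (0,Tmax)` with `Θ ≥ 0`,
homogeneous Neumann boundary conditions `u_x = Θ_x = 0` on `∂Ω`, and
`u, u_t, Θ ∈ C^{2,1}(Ω̄ × (0,Tmax))`. -/
def IsClassicalSolution' (l r D : ℝ) (γ f : ℝ → ℝ) (a : ℝ → ℝ → ℝ)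
    (u Θ : ℝ → ℝ → ℝ) (Tmax : ℝ≥0∞) : Prop :=
  (∀ x ∈ Ioo l r, ∀ t ∈ TJ Tmax,
      pdt (pdt u) x t =
          pdx (fun y s => γ (Θ y s) * pdx (pdt u) y s) x t
        + pdx (fun y s => a y s * pdx u y s) x t
        + pdx (fun y s => f (Θ y s)) x t ∧
      pdt Θ x t = D * pdx (pdx Θ) x t + γ (Θ x t) * (pdx (pdt u) x t) ^ 2
        + f (Θ x t) * pdx (pdt u) x t) ∧
  (∀ t ∈ TJ Tmax, pdx u l t = 0 ∧ pdx u r t = 0 ∧ pdx Θ l t = 0 ∧ pdx Θ r t = 0) ∧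
  (∀ x ∈ Icc l r, ∀ t ∈ TJ Tmax, 0 ≤ Θ x t) ∧
  C21On u (Icc l r) (TJ Tmax) ∧
  C21On (pdt u) (Icc l r) (TJ Tmax) ∧
  C21On Θ (Icc l r) (TJ Tmax)

/-! With `E(s) = ∫ Θ_x(s)²`, the energy identity `E'(t) = -2 ∫ Θ_t Θ_xx` is obtained without
any mixed derivative `Θ_xt`: by the Neumann condition and integration by parts,
`E(y) - E(t) = ∫ (Θ_x(y) - Θ_x(t)) (Θ_x(y) + Θ_x(t)) = -∫ (Θ(y) - Θ(t)) (Θ_xx(y) + Θ_xx(t))`,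
which equals `∫_t^y Φ(s, y) ds` for the jointly continuous
`Φ(s, y) = -∫ Θ_t(s) (Θ_xx(y) + Θ_xx(t))`, so `E'(t) = Φ(t, t)`. Substituting the heat equation for `Θ_t`, the integrand of
`½ E' + (D/2) ∫ Θ_xx²` is `-(D Θ_xx + γ u_tx² + f u_tx) Θ_xx + (D/2) Θ_xx²`, which Young's
inequality bounds pointwise by `c₃ u_tx⁴ + |f(Θ)|⁴`. -/

theorem isOpen_TJ (Tmax : ℝ≥0∞) : IsOpen (TJ Tmax) :=
  isOpen_Ioi.inter (isOpen_Iio.preimage ENNReal.continuous_ofReal)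

section IntervalIntegrals

variable {l r : ℝ}

theorem ContinuousOn.integrableOn_Ioo {g : ℝ → ℝ} (hg : ContinuousOn g (Icc l r)) :
    IntegrableOn g (Ioo l r) :=
  hg.integrableOn_Icc.mono_set Ioo_subset_Icc_self

theorem continuousOn_setIntegral_Ioo {X : Type*} [TopologicalSpace X] [FirstCountableTopology X]
    {K : Set X} (hK : IsCompact K) {F : X → ℝ → ℝ}
    (hF : ContinuousOn (Function.uncurry F) (K ×ˢ Icc l r)) :
    ContinuousOn (fun p => ∫ x in Ioo l r, F p x) K := by
  obtain ⟨M, hM⟩ := (hK.prod isCompact_Icc).exists_bound_of_continuousOn hF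
  refine continuousOn_of_dominated (bound := fun _ => M) (fun p hp => ?_) (fun p hp => ?_)
    (integrableOn_const measure_Ioo_lt_top.ne) ?_
  · exact ((hF.uncurry_left p hp).mono Ioo_subset_Icc_self).aestronglyMeasurable
      measurableSet_Ioo
  · exact (ae_restrict_iff' measurableSet_Ioo).2 (.of_forall fun x hx =>
      hM (p, x) ⟨hp, Ioo_subset_Icc_self hx⟩)
  · exact (ae_restrict_iff' measurableSet_Ioo).2 (.of_forall fun x hx =>
      hF.uncurry_right x (Ioo_subset_Icc_self hx))

theorem hasDerivAt_setIntegral_Ioo {T : Set ℝ} (hT : IsOpen T) {F F' : ℝ → ℝ → ℝ}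
    (hF : ContinuousOn (Function.uncurry F) (Icc l r ×ˢ T))
    (hF' : ContinuousOn (Function.uncurry F') (Icc l r ×ˢ T))
    (hderiv : ∀ x ∈ Ioo l r, ∀ s ∈ T, HasDerivAt (F x) (F' x s) s) {s : ℝ} (hs : s ∈ T) :
    HasDerivAt (fun s => ∫ x in Ioo l r, F x s) (∫ x in Ioo l r, F' x s) s := by
  obtain ⟨ε, hε, hεT⟩ := Metric.nhds_basis_closedBall.mem_iff.1 (hT.mem_nhds hs)
  obtain ⟨M, hM⟩ := (isCompact_Icc.prod (isCompact_closedBall s ε)).exists_bound_of_continuousOn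
    (hF'.mono (prod_mono_right hεT))
  have hmeas : ∀ {G : ℝ → ℝ → ℝ}, ContinuousOn (Function.uncurry G) (Icc l r ×ˢ T) →
      ∀ σ ∈ T, AEStronglyMeasurable (G · σ) (volume.restrict (Ioo l r)) := fun hG σ hσ =>
    ((hG.uncurry_right σ hσ).mono Ioo_subset_Icc_self).aestronglyMeasurable measurableSet_Ioo
  refine (hasDerivAt_integral_of_dominated_loc_of_deriv_le (F := fun s x => F x s)
    (F' := fun s x => F' x s) (bound := fun _ => M) (Metric.closedBall_mem_nhds s hε)
    (Filter.eventually_of_mem (hT.mem_nhds hs) (hmeas hF))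
    (hF.uncurry_right s hs).integrableOn_Ioo (hmeas hF' s hs)
    ?_ (integrableOn_const measure_Ioo_lt_top.ne) ?_).2
  · exact (ae_restrict_iff' measurableSet_Ioo).2 (.of_forall fun x hx σ hσ =>
      hM (x, σ) ⟨Ioo_subset_Icc_self hx, hσ⟩)
  · exact (ae_restrict_iff' measurableSet_Ioo).2 (.of_forall fun x hx σ hσ =>
      hderiv x hx σ (hεT hσ))

theorem setIntegral_Ioo_deriv_mul_eq_neg (hlr : l ≤ r) {u u' v v' : ℝ → ℝ}
    (hu : ∀ x ∈ Icc l r, HasDerivAt u (u' x) x) (hv : ∀ x ∈ Icc l r, HasDerivAt v (v' x) x)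
    (hu' : ContinuousOn u' (Icc l r)) (hv' : ContinuousOn v' (Icc l r))
    (hvl : v l = 0) (hvr : v r = 0) :
    ∫ x in Ioo l r, u' x * v x = -∫ x in Ioo l r, u x * v' x := by
  rw [← uIcc_of_le hlr] at hu hv hu' hv'
  have hparts := intervalIntegral.integral_mul_deriv_eq_deriv_mul hu hv
    hu'.intervalIntegrable hv'.intervalIntegrable
  simp only [intervalIntegral.integral_of_le hlr, integral_Ioc_eq_integral_Ioo, hvl, hvr,
    mul_zero, sub_zero, zero_sub] at hparts
  linarith

end IntervalIntegrals

theorem hasDerivAt_of_sub_eq_intervalIntegral {f : ℝ → ℝ} {Φ : ℝ → ℝ → ℝ} {t δ : ℝ}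
    (hδ : 0 < δ)
    (hΦ : ContinuousOn (Function.uncurry Φ) (Metric.closedBall t δ ×ˢ Metric.closedBall t δ))
    (hf : ∀ y ∈ Metric.closedBall t δ, f y - f t = ∫ s in t..y, Φ s y) :
    HasDerivAt f (Φ t t) t := by
  rw [hasDerivAt_iff_isLittleO, Asymptotics.isLittleO_iff]
  intro c hc
  have hball := Metric.closedBall_mem_nhds t hδ
  obtain ⟨ε, hε, hεΦ⟩ := Metric.continuousAt_iff.1
    (hΦ.continuousAt (prod_mem_nhds hball hball)) c hc
  filter_upwards [Metric.ball_mem_nhds t (lt_min hδ hε)] with y hy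
  have hsub : uIcc t y ⊆ Metric.ball t (min δ ε) :=
    (Real.ball_eq_Ioo t _ ▸ ordConnected_Ioo).uIcc_subset (Metric.mem_ball_self (lt_min hδ hε)) hy
  have hδ_ball : Metric.ball t (min δ ε) ⊆ Metric.closedBall t δ :=
    (Metric.ball_subset_ball (min_le_left _ _)).trans Metric.ball_subset_closedBall
  have hint : IntervalIntegrable (fun s => Φ s y) volume t y :=
    ((hΦ.uncurry_right y (hδ_ball hy)).mono (hsub.trans hδ_ball)).intervalIntegrable
  calc ‖f y - f t - (y - t) • Φ t t‖ = ‖∫ s in t..y, (Φ s y - Φ t t)‖ := by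
        rw [hf y (hδ_ball hy), intervalIntegral.integral_sub hint intervalIntegrable_const,
          intervalIntegral.integral_const]
    _ ≤ c * |y - t| := by
        refine intervalIntegral.norm_integral_le_of_norm_le_const fun s hs => ?_
        rw [← dist_eq_norm]
        refine (hεΦ (x := (s, y)) ?_).le
        have hs' := hsub (uIoc_subset_uIcc hs)
        rw [Prod.dist_eq, max_lt_iff]
        exact ⟨lt_of_lt_of_le hs' (min_le_right _ _), lt_of_lt_of_le hy (min_le_right _ _)⟩
    _ = c * ‖y - t‖ := rfl

section Energy

variable {l r : ℝ} {T : Set ℝ} {w : ℝ → ℝ → ℝ}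

theorem integral_sq_pdx_sub_eq_intervalIntegral (hlr : l ≤ r) (hT : IsOpen T)
    (hw : C21On w (Icc l r) T) (hbc : ∀ s ∈ T, pdx w l s = 0 ∧ pdx w r s = 0) {t y : ℝ}
    (hty : uIcc t y ⊆ T) :
    (∫ x in Ioo l r, pdx w x y ^ 2) - ∫ x in Ioo l r, pdx w x t ^ 2
      = ∫ s in t..y, -∫ x in Ioo l r, pdt w x s * (pdx (pdx w) x y + pdx (pdx w) x t) := by
  obtain ⟨hdiff, hcw, hcwx, hcwxx, hcwt⟩ := hw
  have ht : t ∈ T := hty left_mem_uIcc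
  have hy : y ∈ T := hty right_mem_uIcc
  set φ : ℝ → ℝ := fun x => pdx w x y + pdx w x t
  set φ' : ℝ → ℝ := fun x => pdx (pdx w) x y + pdx (pdx w) x t
  have hφ : ContinuousOn φ (Icc l r) := (hcwx.uncurry_right y hy).add (hcwx.uncurry_right t ht)
  have hφ' : ContinuousOn φ' (Icc l r) :=
    (hcwxx.uncurry_right y hy).add (hcwxx.uncurry_right t ht)
  have hsq : ∀ s ∈ T, IntegrableOn (fun x => pdx w x s ^ 2) (Ioo l r) :=
    fun s hs => ((hcwx.uncurry_right s hs).pow 2).integrableOn_Ioo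
  have hmul : ∀ s ∈ T, IntegrableOn (fun x => pdx w x s * φ x) (Ioo l r) :=
    fun s hs => ((hcwx.uncurry_right s hs).mul hφ).integrableOn_Ioo
  have hparts : ∀ s ∈ T, ∫ x in Ioo l r, pdx w x s * φ x = -∫ x in Ioo l r, w x s * φ' x :=
    fun s hs => setIntegral_Ioo_deriv_mul_eq_neg hlr (fun x hx => (hdiff x hx s hs).1.hasDerivAt)
      (fun x hx => (hdiff x hx y hy).2.1.hasDerivAt.add (hdiff x hx t ht).2.1.hasDerivAt)
      (hcwx.uncurry_right s hs) hφ'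
      (by simp only [φ, (hbc y hy).1, (hbc t ht).1, add_zero])
      (by simp only [φ, (hbc y hy).2, (hbc t ht).2, add_zero])
  have hφ'_fst : ContinuousOn (fun p : ℝ × ℝ => φ' p.1) (Icc l r ×ˢ T) :=
    hφ'.comp continuous_fst.continuousOn fun p hp => hp.1
  have hderiv : ∀ s ∈ T, HasDerivAt (fun σ => -∫ x in Ioo l r, w x σ * φ' x)
      (-∫ x in Ioo l r, pdt w x s * φ' x) s := fun s hs =>
    (hasDerivAt_setIntegral_Ioo hT (F := fun x s => w x s * φ' x)
      (F' := fun x s => pdt w x s * φ' x) (hcw.mul hφ'_fst) (hcwt.mul hφ'_fst)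
      (fun x hx σ hσ => (hdiff x (Ioo_subset_Icc_self hx) σ hσ).2.2.hasDerivAt.mul_const _)
      hs).neg
  have hcont : ContinuousOn (fun s => -∫ x in Ioo l r, pdt w x s * φ' x) (uIcc t y) :=
    (continuousOn_setIntegral_Ioo isCompact_uIcc (F := fun s x => pdt w x s * φ' x)
      ((hcwt.mul hφ'_fst).comp continuous_swap.continuousOn
        fun p hp => ⟨hp.2, hty hp.1⟩)).neg
  rw [intervalIntegral.integral_eq_sub_of_hasDerivAt (fun s hs => hderiv s (hty hs))
      hcont.intervalIntegrable, ← hparts y hy, ← hparts t ht,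
    ← integral_sub (hsq y hy) (hsq t ht), ← integral_sub (hmul y hy) (hmul t ht)]
  congr 1 with x
  ring

theorem hasDerivAt_integral_sq_pdx (hlr : l ≤ r) (hT : IsOpen T) (hw : C21On w (Icc l r) T)
    (hbc : ∀ s ∈ T, pdx w l s = 0 ∧ pdx w r s = 0) {t : ℝ} (ht : t ∈ T) :
    HasDerivAt (fun s => ∫ x in Ioo l r, pdx w x s ^ 2)
      (-2 * ∫ x in Ioo l r, pdt w x t * pdx (pdx w) x t) t := by
  obtain ⟨δ, hδ, hδT⟩ := Metric.nhds_basis_closedBall.mem_iff.1 (hT.mem_nhds ht)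
  have hδ_uIcc : ∀ y ∈ Metric.closedBall t δ, uIcc t y ⊆ T := fun y hy =>
    ((Real.closedBall_eq_Icc (x := t) (r := δ) ▸ ordConnected_Icc).uIcc_subset
      (Metric.mem_closedBall_self hδ.le) hy).trans hδT
  have hΦ := continuousOn_setIntegral_Ioo (l := l) (r := r)
    ((isCompact_closedBall t δ).prod (isCompact_closedBall t δ))
    (F := fun p x => pdt w x p.1 * (pdx (pdx w) x p.2 + pdx (pdx w) x t)) ?_
  · convert hasDerivAt_of_sub_eq_intervalIntegral
      (Φ := fun s y => -∫ x in Ioo l r, pdt w x s * (pdx (pdx w) x y + pdx (pdx w) x t))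
      hδ hΦ.neg fun y hy => integral_sq_pdx_sub_eq_intervalIntegral hlr hT hw hbc (hδ_uIcc y hy)
    using 1
    rw [← integral_const_mul, ← integral_neg]
    congr 1 with x
    ring
  · obtain ⟨-, -, -, hcwxx, hcwt⟩ := hw
    refine ContinuousOn.mul ?_ (ContinuousOn.add ?_ ?_)
    · exact hcwt.comp (f := fun q : (ℝ × ℝ) × ℝ => (q.2, q.1.1)) (by fun_prop)
        fun q hq => ⟨hq.2, hδT hq.1.1⟩
    · exact hcwxx.comp (f := fun q : (ℝ × ℝ) × ℝ => (q.2, q.1.2)) (by fun_prop)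
        fun q hq => ⟨hq.2, hδT hq.1.2⟩
    · exact hcwxx.comp (f := fun q : (ℝ × ℝ) × ℝ => (q.2, t)) (by fun_prop)
        fun q hq => ⟨hq.2, ht⟩

end Energy

theorem young_source_estimate {D C g v p w K : ℝ} (hD : 0 < D) (hg : |g| ≤ C) (hv : |v| ≤ K) :
    -((D * w + g * p ^ 2 + v * p) * w) + D / 2 * w ^ 2
      ≤ (C ^ 2 * D + 1) / D ^ 2 * p ^ 4 + K ^ 4 := by
  have hg2 : g ^ 2 ≤ C ^ 2 := sq_le_sq' (abs_le.1 hg).1 (abs_le.1 hg).2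
  have hv4 : v ^ 4 ≤ K ^ 4 := by
    have := pow_le_pow_left₀ (abs_nonneg v) hv 4
    rwa [Even.pow_abs ⟨2, rfl⟩] at this
  set Q := g * p ^ 2 + v * p
  have hQ : Q ^ 2 ≤ 2 * C ^ 2 * p ^ 4 + 2 * v ^ 2 * p ^ 2 := by
    nlinarith [sq_nonneg (g * p ^ 2 - v * p),
      mul_le_mul_of_nonneg_right hg2 (by positivity : (0 : ℝ) ≤ p ^ 4)]
  have hmix : v ^ 2 * p ^ 2 / D ≤ p ^ 4 / D ^ 2 + v ^ 4 / 4 := by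
    rw [div_add_div _ _ (by positivity) (by norm_num), div_le_div_iff₀ hD (by positivity)]
    nlinarith [sq_nonneg (2 * p ^ 2 - D * v ^ 2), hD]
  calc -((D * w + g * p ^ 2 + v * p) * w) + D / 2 * w ^ 2
      ≤ Q ^ 2 / (2 * D) := by
        rw [le_div_iff₀ (by positivity)]
        nlinarith [sq_nonneg (Q + D * w)]
    _ ≤ (2 * C ^ 2 * p ^ 4 + 2 * v ^ 2 * p ^ 2) / (2 * D) := by gcongr
    _ = C ^ 2 * p ^ 4 / D + v ^ 2 * p ^ 2 / D := by field_simp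
    _ ≤ C ^ 2 * p ^ 4 / D + (p ^ 4 / D ^ 2 + v ^ 4 / 4) := by gcongr
    _ ≤ (C ^ 2 * D + 1) / D ^ 2 * p ^ 4 + K ^ 4 := by
        have : (C ^ 2 * D + 1) / D ^ 2 * p ^ 4 = C ^ 2 * p ^ 4 / D + p ^ 4 / D ^ 2 := by
          field_simp
        linarith [(by norm_num : Even 4).pow_nonneg v]

theorem half_neg_two_integral_add_le_of_forall_le {l r D c₃ c₄ : ℝ} {θt θxx p q : ℝ → ℝ}
    (hθt : ContinuousOn θt (Icc l r)) (hθxx : ContinuousOn θxx (Icc l r))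
    (hp : ContinuousOn p (Icc l r)) (hq : ContinuousOn q (Icc l r))
    (h : ∀ x ∈ Ioo l r, -(θt x * θxx x) + D / 2 * θxx x ^ 2 ≤ c₃ * p x ^ 4 + c₄ * q x) :
    1 / 2 * (-2 * ∫ x in Ioo l r, θt x * θxx x) + D / 2 * ∫ x in Ioo l r, θxx x ^ 2
      ≤ c₃ * (∫ x in Ioo l r, p x ^ 4) + c₄ * ∫ x in Ioo l r, q x := by
  have iL₁ : IntegrableOn (fun x => -(θt x * θxx x)) (Ioo l r) :=
    (hθt.mul hθxx).integrableOn_Ioo.neg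
  have iL₂ : IntegrableOn (fun x => D / 2 * θxx x ^ 2) (Ioo l r) :=
    (hθxx.pow 2).integrableOn_Ioo.const_mul _
  have iR₁ : IntegrableOn (fun x => c₃ * p x ^ 4) (Ioo l r) :=
    (hp.pow 4).integrableOn_Ioo.const_mul _
  have iR₂ : IntegrableOn (fun x => c₄ * q x) (Ioo l r) := hq.integrableOn_Ioo.const_mul _
  calc 1 / 2 * (-2 * ∫ x in Ioo l r, θt x * θxx x) + D / 2 * ∫ x in Ioo l r, θxx x ^ 2
      = ∫ x in Ioo l r, (-(θt x * θxx x) + D / 2 * θxx x ^ 2) := by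
        rw [integral_add iL₁ iL₂, integral_neg, integral_const_mul]
        ring
    _ ≤ ∫ x in Ioo l r, (c₃ * p x ^ 4 + c₄ * q x) :=
        setIntegral_mono_on (iL₁.add iL₂) (iR₁.add iR₂) measurableSet_Ioo h
    _ = c₃ * (∫ x in Ioo l r, p x ^ 4) + c₄ * ∫ x in Ioo l r, q x := by
        rw [integral_add iR₁ iR₂, integral_const_mul, integral_const_mul]

theorem gradient_differential_inequality_general
    (l r D : ℝ) (hlr : l < r) (hD : 0 < D)
    (cγ Cγ Cf α : ℝ) (γ f : ℝ → ℝ) (a : ℝ → ℝ → ℝ)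
    (hstruct : StructHyp l r cγ Cγ Cf α γ f a)
    (Tmax : ℝ≥0∞) (u Θ : ℝ → ℝ → ℝ)
    (hsol : IsClassicalSolution' l r D γ f a u Θ Tmax) :
    ∀ t ∈ TJ Tmax,
      (1 / 2) * deriv (fun s => ∫ x in Ioo l r, (pdx Θ x s) ^ 2) t
        + (D / 2) * (∫ x in Ioo l r, (pdx (pdx Θ) x t) ^ 2)
      ≤ ((Cγ ^ 2 * D + 1) / D ^ 2) * (∫ x in Ioo l r, (pdx (pdt u) x t) ^ 4)
        + Cf ^ 4 * ∫ x in Ioo l r, (Θ x t + 1) ^ (4 * α) := by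
  intro t ht
  obtain ⟨hcγ, -, -, -, -, -, -, -, -, -, hγ, -, -, -, hf⟩ := hstruct
  obtain ⟨hpde, hbc, hΘ0, -, hut, hΘ⟩ := hsol
  have hΘ1 : ContinuousOn (fun x => (Θ x t + 1) ^ (4 * α)) (Icc l r) :=
    ((hΘ.2.1.uncurry_right t ht).add continuousOn_const).rpow_const
      fun x hx => Or.inl (by linarith [hΘ0 x hx t ht] : (0 : ℝ) < Θ x t + 1).ne'
  rw [(hasDerivAt_integral_sq_pdx hlr.le (isOpen_TJ Tmax) hΘ
    (fun s hs => ⟨(hbc s hs).2.2.1, (hbc s hs).2.2.2⟩) ht).deriv]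
  refine half_neg_two_integral_add_le_of_forall_le (hΘ.2.2.2.2.uncurry_right t ht)
    (hΘ.2.2.2.1.uncurry_right t ht) (hut.2.2.1.uncurry_right t ht) hΘ1 fun x hx => ?_
  have hθ := hΘ0 x (Ioo_subset_Icc_self hx) t ht
  have hγx : |γ (Θ x t)| ≤ Cγ := abs_le.2 ⟨by linarith [hγ _ hθ], (hγ _ hθ).2.le⟩
  have hpow : (Cf * (Θ x t + 1) ^ α) ^ 4 = Cf ^ 4 * (Θ x t + 1) ^ (4 * α) := by
    rw [mul_pow, ← Real.rpow_mul_natCast (by linarith), mul_comm α]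
    norm_num
  rw [(hpde x hx t ht).2, ← hpow]
  exact young_source_estimate hD hγx (hf _ hθ)

/-- **Differential inequality for `∫_Ω Θ_x²`.** For a classical solution `(u,Θ)` of (⋆),
with `c₃ := (C_γ²D + 1)/D²` and `c₄ := C_f⁴`, one has
`½ d/dt ∫_Ω Θ_x² + (D/2) ∫_Ω Θ_xx² ≤ c₃ ∫_Ω u_{tx}⁴ + c₄ ∫_Ω (Θ+1)^{4α}`
for all `t ∈ (0,T_max)`, where `Θ` is sufficiently regular that `∫_Ω Θ_x²` is
differentiable in time and the second equation may be differentiated in `x`. -/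
theorem gradient_differential_inequality
    (l r D : ℝ) (hlr : l < r) (hD : 0 < D)
    (cγ Cγ Cf α : ℝ) (γ f : ℝ → ℝ) (a : ℝ → ℝ → ℝ)
    (hstruct : StructHyp l r cγ Cγ Cf α γ f a)
    (Tmax : ℝ≥0∞) (hTmax : 0 < Tmax) (u Θ : ℝ → ℝ → ℝ)
    (hsol : IsClassicalSolution' l r D γ f a u Θ Tmax)
    -- `∫_Ω Θ_x²` is differentiable in time
    (hEdiff : ∀ t ∈ TJ Tmax,
      DifferentiableAt ℝ (fun s => ∫ x in Ioo l r, (pdx Θ x s) ^ 2) t)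
    -- the second equation of (⋆) may be differentiated in `x`
    (hxdiff : ∀ x ∈ Ioo l r, ∀ t ∈ TJ Tmax,
      DifferentiableAt ℝ (fun y => pdt Θ y t) x ∧
      DifferentiableAt ℝ (fun y => pdx (pdx Θ) y t) x ∧
      pdt (pdx Θ) x t = pdx (pdt Θ) x t) :
    ∀ t ∈ TJ Tmax,
      (1 / 2) * deriv (fun s => ∫ x in Ioo l r, (pdx Θ x s) ^ 2) t
        + (D / 2) * (∫ x in Ioo l r, (pdx (pdx Θ) x t) ^ 2)
      ≤ ((Cγ ^ 2 * D + 1) / D ^ 2) * (∫ x in Ioo l r, (pdx (pdt u) x t) ^ 4)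
        + Cf ^ 4 * ∫ x in Ioo l r, (Θ x t + 1) ^ (4 * α) :=
  gradient_differential_inequality_general l r D hlr hD cγ Cγ Cf α γ f a hstruct Tmax u Θ hsol
end
end
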